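/- Let a(z) = 1 + Σ_{k≥1} a_k z^{-(r+1)k} be the formal solution of S_z^r a = (−z)^r a. Then for each n ≥ 0, the leading term of S_z^n a(z) is (−1)^n z^n; that is, S_z^n a(z) = (−1)^n z^n + (lower-order terms supported on exponents ≡ n mod (r+1)). -/

import Mathlib

/-!
Each term of `S_z` shifts exponents of `z` either by `+1` (the term `-z b`) or by `-r ≡ +1
(mod r+1)` (the other two), so `S_z` maps series with powers at most `z^n`, all `≡ n`, to
series with powers at most `z^(n+1)`, all `≡ n+1`; the top coefficient is only reached by
`-z b`, hence gets multiplied by `-1`. Starting from `a = 1 + O(z^(-(r+1)))` gives the claim.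
-/

open HahnSeries Pointwise

/-- The operator `S_z = z^{1-r} ∂_z - (r-1)/(2 z^r) - z` acting on formal Laurent
series with finitely many positive powers of `z`, written in the variable
`t = z⁻¹` (so `coeff m` is the coefficient of `z^{-m}`). -/
noncomputable def Sop (r : ℕ) (f : LaurentSeries ℂ) : LaurentSeries ℂ where
  coeff m := ((r + 1 : ℂ) / 2 - m) * f.coeff (m - r) - f.coeff (m + 1)
  isPWO_support' := by
    have h : (Function.support fun m : ℤ =>
        ((r + 1 : ℂ) / 2 - m) * f.coeff (m - r) - f.coeff (m + 1))
        ⊆ (f.support + {(r : ℤ)}) ∪ (f.support + ({(-1 : ℤ)} : Set ℤ)) := by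
      intro m hm
      simp only [Function.mem_support] at hm
      by_cases h1 : f.coeff (m - (r : ℤ)) = 0
      · have h2 : f.coeff (m + 1) ≠ 0 := fun h2 => hm (by rw [h1, h2]; ring)
        right
        exact Set.mem_add.mpr ⟨m + 1, by simpa using h2, -1, rfl, by ring⟩
      · left
        exact Set.mem_add.mpr ⟨m - r, by simpa using h1, r, rfl, by ring⟩
    exact ((f.isPWO_support.add (Set.isPWO_singleton (r : ℤ))).union
      (f.isPWO_support.add (Set.isPWO_singleton (-1 : ℤ)))).mono h

/-- The formal adjoint `S_z^⋆ = -z^{1-r} ∂_z + (r-1)/(2 z^r) - z`. -/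
noncomputable def Sstar (r : ℕ) (f : LaurentSeries ℂ) : LaurentSeries ℂ where
  coeff m := ((m : ℂ) - (r + 1) / 2) * f.coeff (m - r) - f.coeff (m + 1)
  isPWO_support' := by
    have h : (Function.support fun m : ℤ =>
        ((m : ℂ) - (r + 1) / 2) * f.coeff (m - r) - f.coeff (m + 1))
        ⊆ (f.support + {(r : ℤ)}) ∪ (f.support + ({(-1 : ℤ)} : Set ℤ)) := by
      intro m hm
      simp only [Function.mem_support] at hm
      by_cases h1 : f.coeff (m - (r : ℤ)) = 0
      · have h2 : f.coeff (m + 1) ≠ 0 := fun h2 => hm (by rw [h1, h2]; ring)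
        right
        exact Set.mem_add.mpr ⟨m + 1, by simpa using h2, -1, rfl, by ring⟩
      · left
        exact Set.mem_add.mpr ⟨m - r, by simpa using h1, r, rfl, by ring⟩
    exact ((f.isPWO_support.add (Set.isPWO_singleton (r : ℤ))).union
      (f.isPWO_support.add (Set.isPWO_singleton (-1 : ℤ)))).mono h

/-- Substitution `z ↦ ω z` on a formal Laurent series (`coeff m` is the
coefficient of `z^{-m}`, which gets multiplied by `ω^{-m}`). -/
noncomputable def rot (ω : ℂ) (f : LaurentSeries ℂ) : LaurentSeries ℂ where
  coeff m := ω ^ (-m) * f.coeff m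
  isPWO_support' := f.isPWO_support.mono (fun m hm => by
    simp only [Function.mem_support] at hm ⊢
    exact fun h => hm (by rw [h, mul_zero]))

/-- In terms of the exponent `-m` of `z`: only powers `z^e` with `e ≤ n` and `e ≡ n (mod r+1)`
occur in `f`. -/
def ZDegreeLEModEq (r : ℕ) (n : ℤ) (f : LaurentSeries ℂ) : Prop :=
  ∀ m : ℤ, f.coeff m ≠ 0 → -n ≤ m ∧ -m ≡ n [ZMOD r + 1]

theorem zDegreeLEModEq_zero {r : ℕ} {a : LaurentSeries ℂ}
    (hsupp : ∀ m : ℤ, a.coeff m ≠ 0 → ∃ k : ℕ, m = ((r : ℤ) + 1) * k) :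
    ZDegreeLEModEq r 0 a := by
  intro m hm
  obtain ⟨k, rfl⟩ := hsupp m hm
  exact ⟨by positivity, Int.modEq_zero_iff_dvd.mpr ⟨-k, by ring⟩⟩

namespace Sop

variable {r : ℕ} {n : ℤ} {f : LaurentSeries ℂ}

theorem coeff_apply (m : ℤ) :
    (Sop r f).coeff m = ((r + 1 : ℂ) / 2 - m) * f.coeff (m - r) - f.coeff (m + 1) :=
  rfl

theorem coeff_neg_sub_one (hf : ∀ m : ℤ, f.coeff m ≠ 0 → -n ≤ m) :
    (Sop r f).coeff (-n - 1) = -f.coeff (-n) := by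
  have hlow : f.coeff (-n - 1 - r) = 0 := by
    by_contra h
    have := hf _ h
    omega
  rw [coeff_apply, hlow, sub_add_cancel]
  ring

theorem zDegreeLEModEq_succ (hf : ZDegreeLEModEq r n f) :
    ZDegreeLEModEq r (n + 1) (Sop r f) := by
  intro m hm
  rw [coeff_apply] at hm
  by_cases hshift : f.coeff (m - r) = 0
  · have hnext : f.coeff (m + 1) ≠ 0 := fun h => hm (by rw [hshift, h]; ring)
    obtain ⟨hle, hmod⟩ := hf _ hnext
    refine ⟨by omega, ?_⟩
    rw [Int.modEq_iff_dvd] at hmod ⊢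
    rwa [show n + 1 - -m = n - -(m + 1) by ring]
  · obtain ⟨hle, hmod⟩ := hf _ hshift
    refine ⟨by omega, ?_⟩
    rw [Int.modEq_iff_dvd] at hmod ⊢
    rw [show n + 1 - -m = n - -(m - r) + (r + 1) by ring]
    exact dvd_add hmod dvd_rfl

end Sop

theorem Sz_iterate_leading_general (r : ℕ) (a : LaurentSeries ℂ)
    (ha0 : a.coeff 0 = 1)
    (hsupp : ∀ m : ℤ, a.coeff m ≠ 0 → ∃ k : ℕ, m = ((r : ℤ) + 1) * k)
    (n : ℕ) :
    ((Sop r)^[n] a).coeff (-(n : ℤ)) = (-1) ^ n ∧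
    ∀ m : ℤ, ((Sop r)^[n] a).coeff m ≠ 0 →
      -(n : ℤ) ≤ m ∧ (-m : ℤ) ≡ (n : ℤ) [ZMOD ((r : ℤ) + 1)] := by
  induction n with
  | zero =>
    simp only [Function.iterate_zero, id_eq, Nat.cast_zero, neg_zero]
    exact ⟨ha0, zDegreeLEModEq_zero hsupp⟩
  | succ n ih =>
    obtain ⟨hlead, hdeg⟩ := ih
    rw [Function.iterate_succ_apply']
    push_cast
    refine ⟨?_, Sop.zDegreeLEModEq_succ hdeg⟩
    rw [neg_add', Sop.coeff_neg_sub_one fun m hm => (hdeg m hm).1, hlead, pow_succ]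
    ring

/-- For the formal solution `a ∈ 1 + z^{-(r+1)}ℂ[[z^{-(r+1)}]]` of `S_z^r a = (-z)^r a`,
the series `S_z^n a` has leading term `(-1)^n z^n` and all lower-order terms are
supported on exponents `≡ n mod (r+1)`.  In `t = z⁻¹` coordinates: the coefficient
at `t^{-n}` is `(-1)^n` and all nonzero coefficients sit at `m ≥ -n` with
`-m ≡ n mod (r+1)`. -/
theorem Sz_iterate_leading (r : ℕ) (hr : 2 ≤ r) (a : LaurentSeries ℂ)
    (ha0 : a.coeff 0 = 1)
    (hsupp : ∀ m : ℤ, a.coeff m ≠ 0 → ∃ k : ℕ, m = ((r : ℤ) + 1) * k)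
    (hode : (Sop r)^[r] a = ((-1 : ℂ) ^ r) • (HahnSeries.single (-(r : ℤ)) 1 * a))
    (n : ℕ) :
    ((Sop r)^[n] a).coeff (-(n : ℤ)) = (-1) ^ n ∧
    ∀ m : ℤ, ((Sop r)^[n] a).coeff m ≠ 0 →
      -(n : ℤ) ≤ m ∧ (-m : ℤ) ≡ (n : ℤ) [ZMOD ((r : ℤ) + 1)] :=
  Sz_iterate_leading_general r a ha0 hsupp n
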